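/- If ρ(z) = 0 componentwise at a point z in the interior of D, det J_ρ(z) = 0, and the Perron–Frobenius eigenvalue λ_PF(z) of J_ρ(z) (the eigenvalue associated with the unique positive eigenvector) equals 0, then z is the unique zero of ρ in D. (Sketch: by strict convexity of each ρ_i along the positive Perron direction φ_PF(z), ρ_i(z + γφ_PF(z)) ≥ 0 for all admissible γ; a second zero z₁ would force ρ < 0 on the open segment between z and z₁, contradicting this nonnegativity since φ_PF(z) > 0.) -/

import Mathlib

open Finset

private lemma matpow_nonneg' {k : ℕ} {A : Matrix (Fin k) (Fin k) ℝ}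
    (h : ∀ i j, 0 ≤ A i j) (m : ℕ) : ∀ i j, 0 ≤ (A ^ m) i j := by
  induction m with
  | zero =>
    intro i j
    rw [pow_zero]
    by_cases hij : i = j <;> simp [Matrix.one_apply, hij]
  | succ m ih =>
    intro i j
    rw [pow_succ, Matrix.mul_apply]
    exact Finset.sum_nonneg fun l _ => mul_nonneg (ih i l) (h l j)

private lemma matpow_pattern' {k : ℕ} {A B : Matrix (Fin k) (Fin k) ℝ}
    (hA : ∀ i j, 0 ≤ A i j) (hB : ∀ i j, 0 ≤ B i j)
    (hAB : ∀ i j, 0 < B i j → 0 < A i j) (m : ℕ) :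
    ∀ i j, 0 < (B ^ m) i j → 0 < (A ^ m) i j := by
  induction m with
  | zero =>
    intro i j h
    rw [pow_zero] at h ⊢
    exact h
  | succ m ih =>
    intro i j hpos
    rw [pow_succ, Matrix.mul_apply] at hpos
    obtain ⟨l, hl⟩ : ∃ l, 0 < (B ^ m) i l * B l j := by
      by_contra hc
      push_neg at hc
      have : ∑ l, (B ^ m) i l * B l j ≤ 0 := Finset.sum_nonpos fun l _ => hc l
      linarith
    have h1 : 0 < (B ^ m) i l := by
      rcases (matpow_nonneg' hB m i l).lt_or_eq with h | h
      · exact h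
      · rw [← h] at hl; simp at hl
    have h2 : 0 < B l j := by
      rcases (hB l j).lt_or_eq with h | h
      · exact h
      · rw [← h] at hl; simp at hl
    rw [pow_succ, Matrix.mul_apply]
    calc (0:ℝ) < (A ^ m) i l * A l j := mul_pos (ih i l h1) (hAB l j h2)
    _ ≤ ∑ l', (A ^ m) i l' * A l' j :=
        Finset.single_le_sum (f := fun l' => (A ^ m) i l' * A l' j)
          (fun l' _ => mul_nonneg (matpow_nonneg' hA m i l') (hA l' j)) (Finset.mem_univ l)

private lemma tangent_pow' {a b : ℝ} (hb : 0 < b) (ha : 0 ≤ a) {n : ℕ} (hn : 1 ≤ n) :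
    b ^ n + n * b ^ (n - 1) * (a - b) ≤ a ^ n := by
  have hb' : b ≠ 0 := hb.ne'
  have h1 : (-2 : ℝ) ≤ a / b - 1 := by
    have : 0 ≤ a / b := div_nonneg ha hb.le
    linarith
  have h2 := one_add_mul_le_pow h1 n
  have h3 : (1 + (a / b - 1)) = a / b := by ring
  rw [h3] at h2
  have h4 : b ^ n * (1 + n * (a / b - 1)) ≤ b ^ n * (a / b) ^ n :=
    mul_le_mul_of_nonneg_left h2 (pow_nonneg hb.le n)
  have h5 : b ^ n * (a / b) ^ n = a ^ n := by
    rw [div_pow]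
    field_simp
  have h6 : b ^ n * (1 + n * (a / b - 1)) = b ^ n + n * b ^ (n - 1) * (a - b) := by
    have hpow : b ^ n = b ^ (n - 1) * b := by
      rw [← pow_succ]
      congr 1
      omega
    rw [hpow]
    field_simp
  linarith [h6 ▸ h5 ▸ h4]

private lemma mid_strict' {a b : ℝ} (ha : 0 ≤ a) (hb : 0 ≤ b) (hab : a ≠ b) {n : ℕ}
    (hn : 2 ≤ n) : ((a + b) / 2) ^ n < (a ^ n + b ^ n) / 2 := by
  have h := (strictConvexOn_pow hn).2 (Set.mem_Ici.mpr ha) (Set.mem_Ici.mpr hb) hab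
    (by norm_num : (0:ℝ) < 1/2) (by norm_num : (0:ℝ) < 1/2) (by norm_num)
  have e1 : (1/2 : ℝ) • a + (1/2 : ℝ) • b = (a + b) / 2 := by
    simp [smul_eq_mul]; ring
  have e2 : (1/2 : ℝ) • a ^ n + (1/2 : ℝ) • b ^ n = (a ^ n + b ^ n) / 2 := by
    simp [smul_eq_mul]; ring
  rw [e1, e2] at h
  exact h

/-- A `k×k` matrix is irreducible if some power connects every pair of indices. -/
def MatIrreducible {k : ℕ} (χ : Matrix (Fin k) (Fin k) ℝ) : Prop :=
  ∀ i j, ∃ m : ℕ, 0 < (χ ^ m) i j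

/-- If `ρ(z) = 0` at an interior point `z` of `D`, `det J_ρ(z) = 0`, and the
Perron–Frobenius eigenvalue of `J_ρ(z)` (the one carrying a strictly positive
eigenvector `φ_PF(z)`) equals `0`, then `z` is the unique zero of `ρ` in `D`. -/
theorem stmt_19 (r k : ℕ) (hr : 2 ≤ r) (hk : 1 ≤ k)
    (χ : Matrix (Fin k) (Fin k) ℝ) (hχ : ∀ i j, 0 ≤ χ i j) (hχd : ∀ i, χ i i = 1)
    (hirr : MatIrreducible χ) (hsym : ∀ i j, χ i j = 0 ↔ χ j i = 0)
    (α : Fin k → ℝ) (hα : ∀ i, 0 ≤ α i)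
    (ρ : Fin k → (Fin k → ℝ) → ℝ)
    (hρ : ∀ i x, ρ i x =
      α i - x i + (1 / (r : ℝ)) * (1 - 1 / (r : ℝ)) ^ (r - 1) * (∑ j, χ i j * x j) ^ r)
    (D : Set (Fin k → ℝ))
    (hD : D = {x | (∀ i, x i ∈ Set.Icc (0 : ℝ) ((r : ℝ) / ((r : ℝ) - 1))) ∧
      ∀ i, x i + ∑ j ∈ Finset.univ.erase i, χ i j * x j ≤ (r : ℝ) / ((r : ℝ) - 1)})
    (z : Fin k → ℝ) (hz : z ∈ interior D) (hρz : ∀ i, ρ i z = 0)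
    (J : Matrix (Fin k) (Fin k) ℝ)
    (hJ : ∀ i j, J i j = fderiv ℝ (ρ i) z (Pi.single j 1))
    (hdet : J.det = 0)
    -- `λ_PF(z) = 0`: the strictly positive (Perron) eigenvector of `J` has eigenvalue `0`
    (φ : Fin k → ℝ) (hφpos : ∀ i, 0 < φ i) (hφ : J.mulVec φ = 0) :
    ∀ w ∈ D, (∀ i, ρ i w = 0) → w = z := by
  intro w hw hρw
  -- basic positivity
  have hr2 : (2 : ℝ) ≤ (r : ℝ) := by exact_mod_cast hr
  obtain ⟨c, hcdef⟩ : ∃ c : ℝ, c = 1 / (r : ℝ) * (1 - 1 / (r : ℝ)) ^ (r - 1) := ⟨_, rfl⟩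
  have hc : 0 < c := by
    have h1 : (0:ℝ) < 1 - 1 / (r : ℝ) := by
      rw [sub_pos, div_lt_one (by linarith)]
      linarith
    have h2 : (0:ℝ) < 1 / (r : ℝ) := by positivity
    rw [hcdef]
    positivity
  obtain ⟨s, hs⟩ : ∃ f : Fin k → ℝ, ∀ i, f i = ∑ j, χ i j * z j := ⟨_, fun _ => rfl⟩
  obtain ⟨d, hd⟩ : ∃ f : Fin k → ℝ, ∀ i, f i = c * r * s i ^ (r - 1) := ⟨_, fun _ => rfl⟩
  -- Step A : the Jacobian entries
  have hJij : ∀ i j, J i j = d i * χ i j - (if i = j then 1 else 0) := by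
    intro i j
    have hre : ρ i = fun x : Fin k → ℝ => α i - x i + c * (∑ l, χ i l * x l) ^ r := by
      funext x; rw [hρ i x, hcdef]
    set L : (Fin k → ℝ) →L[ℝ] ℝ := ∑ l, χ i l • ContinuousLinearMap.proj l with hL_def
    have hLapp : ∀ x : Fin k → ℝ, L x = ∑ l, χ i l * x l := by
      intro x
      simp [hL_def, ContinuousLinearMap.sum_apply, ContinuousLinearMap.smul_apply,
        ContinuousLinearMap.proj_apply, smul_eq_mul]
    have hLd : HasFDerivAt (fun x : Fin k → ℝ => ∑ l, χ i l * x l) L z := by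
      have he : (fun x : Fin k → ℝ => ∑ l, χ i l * x l) = fun x => L x := by
        funext x; rw [hLapp]
      rw [he]
      exact L.hasFDerivAt
    have hpow : HasFDerivAt (fun x : Fin k → ℝ => (∑ l, χ i l * x l) ^ r)
        (((r : ℝ) * (∑ l, χ i l * z l) ^ (r - 1)) • L) z := by
      have := (hasDerivAt_pow r (∑ l, χ i l * z l)).comp_hasFDerivAt z hLd
      exact this
    have hproj : HasFDerivAt (fun x : Fin k → ℝ => x i)
        (ContinuousLinearMap.proj i : (Fin k → ℝ) →L[ℝ] ℝ) z :=
      (ContinuousLinearMap.proj i : (Fin k → ℝ) →L[ℝ] ℝ).hasFDerivAt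
    have hfull : HasFDerivAt (ρ i)
        ((0 - (ContinuousLinearMap.proj i : (Fin k → ℝ) →L[ℝ] ℝ)) +
          c • (((r : ℝ) * (∑ l, χ i l * z l) ^ (r - 1)) • L)) z := by
      rw [hre]
      exact ((hasFDerivAt_const (α i) z).sub hproj).add (hpow.const_mul c)
    have hLs : L (Pi.single j 1) = χ i j := by
      rw [hLapp]
      simp [Pi.single_apply]
    rw [hJ i j, hfull.fderiv]
    simp only [ContinuousLinearMap.add_apply, ContinuousLinearMap.sub_apply,
      ContinuousLinearMap.zero_apply, ContinuousLinearMap.smul_apply, smul_eq_mul,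
      ContinuousLinearMap.coe_smul', Pi.smul_apply, hLs, ContinuousLinearMap.proj_apply,
      Pi.single_apply]
    rw [hd i, hs i]
    ring
  -- Step B : positivity of s and d
  have hz0 : ∀ j, 0 ≤ z j := by
    have hzD := interior_subset hz
    rw [hD] at hzD
    exact fun j => (hzD.1 j).1
  have hw0 : ∀ j, 0 ≤ w j := by
    rw [hD] at hw
    exact fun j => (hw.1 j).1
  have hsn : ∀ i, 0 ≤ s i := by
    intro i
    rw [hs i]
    exact Finset.sum_nonneg fun j _ => mul_nonneg (hχ i j) (hz0 j)
  have hdphi : ∀ i, d i * (∑ j, χ i j * φ j) = φ i := by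
    intro i
    have h0 : ∑ j, J i j * φ j = 0 := by
      have := congrFun hφ i
      simpa [Matrix.mulVec, dotProduct] using this
    have h1 : ∑ j, J i j * φ j
        = (∑ j, d i * (χ i j * φ j)) - ∑ j, (if i = j then (1:ℝ) else 0) * φ j := by
      rw [← Finset.sum_sub_distrib]
      apply Finset.sum_congr rfl
      intro j _
      rw [hJij i j]
      ring
    have h2 : ∑ j, (if i = j then (1:ℝ) else 0) * φ j = φ i := by
      simp [ite_mul]
    rw [h1, h2, ← Finset.mul_sum] at h0
    linarith
  have hXpos : ∀ i, 0 < ∑ j, χ i j * φ j := by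
    intro i
    have h1 : χ i i * φ i ≤ ∑ j, χ i j * φ j :=
      Finset.single_le_sum (f := fun j => χ i j * φ j)
        (fun j _ => mul_nonneg (hχ i j) (hφpos j).le) (Finset.mem_univ i)
    rw [hχd i, one_mul] at h1
    exact lt_of_lt_of_le (hφpos i) h1
  have hdpos : ∀ i, 0 < d i := by
    intro i
    by_contra hc'
    push_neg at hc'
    have : d i * (∑ j, χ i j * φ j) ≤ 0 := mul_nonpos_of_nonpos_of_nonneg hc' (hXpos i).le
    rw [hdphi i] at this
    exact absurd this (not_le.mpr (hφpos i))
  have hspos : ∀ i, 0 < s i := by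
    intro i
    rcases (hsn i).lt_or_eq with h | h
    · exact h
    · exfalso
      have hdz : d i = 0 := by
        rw [hd i, ← h, zero_pow (by omega : r - 1 ≠ 0), mul_zero]
      exact absurd hdz (hdpos i).ne'
  -- Step C : a strictly positive left null vector ψ of J
  obtain ⟨ψ₀, hψ₀ne, hψ₀⟩ : ∃ v ≠ 0, Matrix.vecMul v J = 0 :=
    (Matrix.exists_vecMul_eq_zero_iff).mpr hdet
  have hψ₀J : ∀ j, ∑ i, ψ₀ i * (d i * χ i j) = ψ₀ j := by
    intro j
    have h0 : ∑ i, ψ₀ i * J i j = 0 := by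
      have := congrFun hψ₀ j
      simpa [Matrix.vecMul, dotProduct] using this
    have h1 : ∑ i, ψ₀ i * J i j
        = (∑ i, ψ₀ i * (d i * χ i j)) - ∑ i, ψ₀ i * (if i = j then (1:ℝ) else 0) := by
      rw [← Finset.sum_sub_distrib]
      apply Finset.sum_congr rfl
      intro i _
      rw [hJij i j]
      ring
    have h2 : ∑ i, ψ₀ i * (if i = j then (1:ℝ) else 0) = ψ₀ j := by
      simp [mul_ite]
    rw [h1, h2] at h0
    linarith
  obtain ⟨P, hP⟩ : ∃ P : Matrix (Fin k) (Fin k) ℝ,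
      ∀ i j, P i j = d i * χ i j * φ j / φ i := ⟨_, fun _ _ => rfl⟩
  have hPnn : ∀ i j, 0 ≤ P i j := by
    intro i j
    rw [hP i j]
    exact div_nonneg (mul_nonneg (mul_nonneg (hdpos i).le (hχ i j)) (hφpos j).le) (hφpos i).le
  have hProw : ∀ i, ∑ j, P i j = 1 := by
    intro i
    have h1 : ∑ j, P i j = (d i * ∑ j, χ i j * φ j) / φ i := by
      rw [Finset.mul_sum, Finset.sum_div]
      apply Finset.sum_congr rfl
      intro j _
      rw [hP i j]
      ring
    rw [h1, hdphi i, div_self (hφpos i).ne']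
  have hPpat : ∀ i j, 0 < χ i j → 0 < P i j := by
    intro i j h
    rw [hP i j]
    exact div_pos (mul_pos (mul_pos (hdpos i) h) (hφpos j)) (hφpos i)
  obtain ⟨ψ', hψ'⟩ : ∃ f : Fin k → ℝ, ∀ i, f i = ψ₀ i * φ i := ⟨_, fun _ => rfl⟩
  have hψ'P : ∀ j, ∑ i, ψ' i * P i j = ψ' j := by
    intro j
    have h1 : ∀ i, ψ' i * P i j = (ψ₀ i * (d i * χ i j)) * φ j := by
      intro i
      rw [hψ' i, hP i j]
      field_simp [(hφpos i).ne']
    calc ∑ i, ψ' i * P i j = ∑ i, (ψ₀ i * (d i * χ i j)) * φ j :=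
          Finset.sum_congr rfl fun i _ => h1 i
    _ = (∑ i, ψ₀ i * (d i * χ i j)) * φ j := by rw [Finset.sum_mul]
    _ = ψ₀ j * φ j := by rw [hψ₀J j]
    _ = ψ' j := (hψ' j).symm
  obtain ⟨ψh, hψh⟩ : ∃ f : Fin k → ℝ, ∀ i, f i = |ψ' i| := ⟨_, fun _ => rfl⟩
  have hψhnn : ∀ i, 0 ≤ ψh i := by
    intro i
    rw [hψh i]
    exact abs_nonneg _
  have hfix : ∀ j, ∑ i, ψh i * P i j = ψh j := by
    have hle : ∀ j, ψh j ≤ ∑ i, ψh i * P i j := by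
      intro j
      calc ψh j = |∑ i, ψ' i * P i j| := by rw [hψ'P j, hψh j]
      _ ≤ ∑ i, |ψ' i * P i j| := Finset.abs_sum_le_sum_abs _ _
      _ = ∑ i, ψh i * P i j := Finset.sum_congr rfl fun i _ => by
            rw [abs_mul, abs_of_nonneg (hPnn i j), hψh i]
    have htot : ∑ j, (∑ i, ψh i * P i j - ψh j) = 0 := by
      rw [Finset.sum_sub_distrib, Finset.sum_comm]
      have h1 : ∀ i, ∑ j, ψh i * P i j = ψh i := by
        intro i
        rw [← Finset.mul_sum, hProw i, mul_one]
      rw [Finset.sum_congr rfl fun i _ => h1 i, sub_self]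
    intro j
    have := (Finset.sum_eq_zero_iff_of_nonneg
      (fun j _ => sub_nonneg.mpr (hle j))).mp htot j (Finset.mem_univ j)
    linarith
  have hfixpow : ∀ m j, ∑ i, ψh i * (P ^ m) i j = ψh j := by
    intro m
    induction m with
    | zero =>
      intro j
      rw [pow_zero]
      simp [Matrix.one_apply, mul_ite]
    | succ m ih =>
      intro j
      rw [pow_succ]
      calc ∑ i, ψh i * (P ^ m * P) i j
          = ∑ i, ∑ l, ψh i * ((P ^ m) i l * P l j) := by
            apply Finset.sum_congr rfl
            intro i _
            rw [Matrix.mul_apply, Finset.mul_sum]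
        _ = ∑ l, (∑ i, ψh i * (P ^ m) i l) * P l j := by
            rw [Finset.sum_comm]
            apply Finset.sum_congr rfl
            intro l _
            rw [Finset.sum_mul]
            apply Finset.sum_congr rfl
            intro i _
            ring
        _ = ∑ l, ψh l * P l j := by
            apply Finset.sum_congr rfl
            intro l _
            rw [ih l]
        _ = ψh j := hfix j
  obtain ⟨j0, hj0⟩ : ∃ j0, 0 < ψh j0 := by
    by_contra hcon
    push_neg at hcon
    apply hψ₀ne
    funext i
    have h0 : ψh i = 0 := le_antisymm (hcon i) (hψhnn i)
    rw [hψh i, abs_eq_zero, hψ' i] at h0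
    have := mul_eq_zero.mp h0
    rcases this with h | h
    · exact h
    · exact absurd h (hφpos i).ne'
  have hψhpos : ∀ i, 0 < ψh i := by
    intro i
    obtain ⟨m, hm⟩ := hirr j0 i
    have hPm : 0 < (P ^ m) j0 i := matpow_pattern' hPnn hχ hPpat m j0 i hm
    have hle : ψh j0 * (P ^ m) j0 i ≤ ∑ l, ψh l * (P ^ m) l i :=
      Finset.single_le_sum (f := fun l => ψh l * (P ^ m) l i)
        (fun l _ => mul_nonneg (hψhnn l) (matpow_nonneg' hPnn m l i)) (Finset.mem_univ j0)
    rw [hfixpow m i] at hle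
    exact lt_of_lt_of_le (mul_pos hj0 hPm) hle
  obtain ⟨ψ, hψd⟩ : ∃ f : Fin k → ℝ, ∀ i, f i = ψh i / φ i := ⟨_, fun _ => rfl⟩
  have hψpos : ∀ i, 0 < ψ i := by
    intro i
    rw [hψd i]
    exact div_pos (hψhpos i) (hφpos i)
  have hψN : ∀ j, ∑ i, ψ i * (d i * χ i j) = ψ j := by
    intro j
    have h1 : (∑ i, ψ i * (d i * χ i j)) * φ j = ψ j * φ j := by
      rw [Finset.sum_mul]
      calc ∑ i, ψ i * (d i * χ i j) * φ j = ∑ i, ψh i * P i j := by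
            apply Finset.sum_congr rfl
            intro i _
            rw [hψd i, hP i j]
            field_simp
        _ = ψh j := hfix j
        _ = ψ j * φ j := by
            rw [hψd j, div_mul_cancel₀ _ (hφpos j).ne']
    exact mul_right_cancel₀ (hφpos j).ne' h1
  -- Step D : the convexity argument
  obtain ⟨u, hu⟩ : ∃ f : Fin k → ℝ, ∀ i, f i = w i - z i := ⟨_, fun _ => rfl⟩
  obtain ⟨v, hv⟩ : ∃ f : Fin k → ℝ, ∀ i, f i = ∑ j, χ i j * u j := ⟨_, fun _ => rfl⟩
  have hsv : ∀ i, s i + v i = ∑ j, χ i j * w j := by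
    intro i
    rw [hs i, hv i, ← Finset.sum_add_distrib]
    apply Finset.sum_congr rfl
    intro j _
    rw [hu j]
    ring
  have hsvnn : ∀ i, 0 ≤ s i + v i := by
    intro i
    rw [hsv i]
    exact Finset.sum_nonneg fun j _ => mul_nonneg (hχ i j) (hw0 j)
  have e0 : ∀ i, α i - z i + c * s i ^ r = 0 := by
    intro i
    have h1 := hρz i
    rw [hρ i z] at h1
    rw [hcdef, hs i]
    linear_combination h1
  have e1 : ∀ i, u i = c * ((s i + v i) ^ r - s i ^ r) := by
    intro i
    have h1 := hρw i
    rw [hρ i w] at h1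
    have h2 := e0 i
    rw [hsv i, hu i, hcdef, hs i]
    rw [hcdef, hs i] at h2
    linear_combination h2 - h1
  have key : ∑ i, ψ i * u i = ∑ i, ψ i * (d i * v i) := by
    calc ∑ j, ψ j * u j = ∑ j, (∑ i, ψ i * (d i * χ i j)) * u j := by
          apply Finset.sum_congr rfl
          intro j _
          rw [hψN j]
    _ = ∑ j, ∑ i, ψ i * (d i * χ i j) * u j := by
          apply Finset.sum_congr rfl
          intro j _
          rw [Finset.sum_mul]
    _ = ∑ i, ∑ j, ψ i * (d i * χ i j) * u j := Finset.sum_comm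
    _ = ∑ i, ψ i * (d i * v i) := by
          apply Finset.sum_congr rfl
          intro i _
          rw [hv i, Finset.mul_sum, Finset.mul_sum]
          apply Finset.sum_congr rfl
          intro j _
          ring
  obtain ⟨B, hB⟩ : ∃ f : Fin k → ℝ, ∀ i,
      f i = (s i + v i / 2) ^ r - s i ^ r - r * s i ^ (r - 1) * (v i / 2) := ⟨_, fun _ => rfl⟩
  obtain ⟨M, hM⟩ : ∃ f : Fin k → ℝ, ∀ i,
      f i = (s i + v i / 2) ^ r - (s i ^ r + (s i + v i) ^ r) / 2 := ⟨_, fun _ => rfl⟩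
  have hBnn : ∀ i, 0 ≤ B i := by
    intro i
    have ha : 0 ≤ s i + v i / 2 := by
      have := hsvnn i
      have := hsn i
      linarith
    have ht := tangent_pow' (hspos i) ha (by omega : 1 ≤ r) (a := s i + v i / 2)
    have h2 : s i + v i / 2 - s i = v i / 2 := by ring
    rw [h2] at ht
    rw [hB i]
    linarith
  have hMneg : ∀ i, v i ≠ 0 → M i < 0 := by
    intro i hvi
    have hab : s i ≠ s i + v i := by
      intro h
      apply hvi
      linarith [h]
    have hm := mid_strict' (hsn i) (hsvnn i) hab hr
    have h2 : (s i + (s i + v i)) / 2 = s i + v i / 2 := by ring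
    rw [h2] at hm
    rw [hM i]
    linarith
  have hBM : ∀ i, 2 * c * (ψ i * B i) =
      2 * c * (ψ i * M i) + (ψ i * u i - ψ i * (d i * v i)) := by
    intro i
    rw [hB i, hM i, hd i]
    linear_combination (-ψ i) * (e1 i)
  have hS : 2 * c * (∑ i, ψ i * B i) = 2 * c * (∑ i, ψ i * M i) := by
    rw [Finset.mul_sum, Finset.mul_sum]
    rw [Finset.sum_congr rfl fun i _ => hBM i]
    rw [Finset.sum_add_distrib, Finset.sum_sub_distrib, key, sub_self, add_zero]
  have hsB : 0 ≤ ∑ i, ψ i * B i :=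
    Finset.sum_nonneg fun i _ => mul_nonneg (hψpos i).le (hBnn i)
  have hsMnp : ∀ i, ψ i * M i ≤ 0 := by
    intro i
    by_cases hvi : v i = 0
    · have : M i = 0 := by
        rw [hM i, hvi]
        ring
      rw [this, mul_zero]
    · exact (mul_neg_of_pos_of_neg (hψpos i) (hMneg i hvi)).le
  have hsM : ∑ i, ψ i * M i ≤ 0 := Finset.sum_nonpos fun i _ => hsMnp i
  have hsM0 : ∑ i, ψ i * M i = 0 := by
    nlinarith [hS, hsB, hsM, hc]
  have hterm : ∀ i, ψ i * M i = 0 := by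
    have h0 : ∑ i, -(ψ i * M i) = 0 := by
      rw [Finset.sum_neg_distrib, hsM0, neg_zero]
    intro i
    have := (Finset.sum_eq_zero_iff_of_nonneg
      (fun i _ => neg_nonneg.mpr (hsMnp i))).mp h0 i (Finset.mem_univ i)
    linarith
  have hv0 : ∀ i, v i = 0 := by
    intro i
    by_contra hvi
    have := hMneg i hvi
    have h1 := hterm i
    nlinarith [hψpos i]
  funext i
  have h1 := e1 i
  rw [hv0 i, hu i] at h1
  have : w i - z i = 0 := by
    rw [h1]
    ring
  linarith
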